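/- Two-sided value gap bound under density-dependent model error: Let S be a finite nonempty type, let γ be a real number with 0 < γ < 1, let r_max > 0 and set c = r_max/(1−γ). Let T and T̂ be row-stochastic matrices on S, let r : S → ℝ satisfy |r x| ≤ r_max for all x, let V be the value function of (T, r, γ) with |V x| ≤ c for all x, and let μ₀ be a probability vector on S. Let u : S → ℝ, and assume there exist C > 0 and ε_approx ≥ 0 such that for every x in S and every f : S → ℝ with |f y| ≤ 1 for all y, one has |∑_y (T̂ x y − T x y) · f y| ≤ C · (∑_y T̂ x y · u y) + ε_approx. Define the normalized returns η_M = (1−γ) · ∑'_{t≥0} γ^t · ∑_x (μ₀ᵀ T^t) x · r x and η_{M̂} = (1−γ) · ∑'_{t≥0} γ^t · ∑_x (μ₀ᵀ T̂^t) x · r x, and the normalized occupancy ρ̂ⁿ x = (1−γ) · ∑'_{t≥0} γ^t · (μ₀ᵀ T̂^t) x. Then |η_{M̂} − η_M| ≤ γ·c·C · ∑_x ρ̂ⁿ x · (∑_y T̂ x y · u y) + γ·c·ε_approx. -/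

import Mathlib

/-!
The normalized occupancy `ρ` of a row-stochastic `P` started from `μ` obeys the flow equation
`ρ = (1 - γ) μ + γ ρ P`, hence `ρ ⬝ (V - γ P V) = (1 - γ) μ ⬝ V` for every `V`, and the normalized
return is `ρ ⬝ r`. Writing `r = V - γ T V = (V - γ T̂ V) + γ (T̂ - T) V` by the Bellman equation and
pairing with both occupancies gives the simulation identity `η̂ - η = γ ρ̂ ⬝ (T̂ - T) V`. The model
error assumption, applied to `V / c`, bounds `|((T̂ - T) V) x|` pointwise, and this bound is then
averaged against the probability vector `ρ̂`.
-/

open Finset Matrix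

namespace Matrix

variable {ι : Type*} [Fintype ι]

lemma abs_dotProduct_le_of_nonneg {ν w B : ι → ℝ} (hν : 0 ≤ ν) (hw : ∀ i, |w i| ≤ B i) :
    |ν ⬝ᵥ w| ≤ ν ⬝ᵥ B := by
  have hw' : ∀ i, -B i ≤ w i ∧ w i ≤ B i := fun i => abs_le.1 (hw i)
  refine abs_le.2 ⟨?_, dotProduct_le_dotProduct_of_nonneg_left (fun i => (hw' i).2) hν⟩
  rw [← dotProduct_neg]
  exact dotProduct_le_dotProduct_of_nonneg_left (fun i => (hw' i).1) hν

lemma abs_dotProduct_le_mul_of_forall_abs_le_one {g : ι → ℝ} {B : ℝ}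
    (hg : ∀ f : ι → ℝ, (∀ i, |f i| ≤ 1) → |g ⬝ᵥ f| ≤ B) {f : ι → ℝ} {c : ℝ}
    (hc : 0 ≤ c) (hf : ∀ i, |f i| ≤ c) : |g ⬝ᵥ f| ≤ c * B := by
  rcases hc.eq_or_lt with rfl | hc
  · have : f = 0 := funext fun i => abs_nonpos_iff.1 (hf i)
    simp [this]
  · have hscaled : ∀ i, |(c⁻¹ • f) i| ≤ 1 := fun i => by
      rw [Pi.smul_apply, smul_eq_mul, abs_mul, abs_inv, abs_of_pos hc, inv_mul_le_one₀ hc]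
      exact hf i
    calc |g ⬝ᵥ f| = c * |g ⬝ᵥ (c⁻¹ • f)| := by
          rw [dotProduct_smul, smul_eq_mul, abs_mul, abs_inv, abs_of_pos hc,
            mul_inv_cancel_left₀ hc.ne']
      _ ≤ c * B := by gcongr; exact hg _ hscaled

variable [DecidableEq ι] {P : Matrix ι ι ℝ} {μ : ι → ℝ}

lemma vecMul_mem_stdSimplex (hP : P ∈ rowStochastic ℝ ι) (hμ : μ ∈ stdSimplex ℝ ι) :
    μ ᵥ* P ∈ stdSimplex ℝ ι := by
  refine ⟨nonneg_vecMul_of_mem_rowStochastic hP hμ.1, ?_⟩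
  have hμ1 : μ ⬝ᵥ 1 = 1 := (dotProduct_one μ).trans hμ.2
  rw [← dotProduct_one]
  exact vecMul_dotProduct_one_eq_one_rowStochastic hP hμ1

lemma vecMul_pow_mem_stdSimplex (hP : P ∈ rowStochastic ℝ ι) (hμ : μ ∈ stdSimplex ℝ ι)
    (t : ℕ) : μ ᵥ* P ^ t ∈ stdSimplex ℝ ι :=
  vecMul_mem_stdSimplex (pow_mem hP t) hμ

end Matrix

section Discounted

variable {S : Type*} [Fintype S] [DecidableEq S]

noncomputable def discountedOccupancy (γ : ℝ) (P : Matrix S S ℝ) (μ : S → ℝ) (x : S) :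
    ℝ :=
  (1 - γ) * ∑' t : ℕ, γ ^ t * (μ ᵥ* P ^ t) x

noncomputable def discountedReturn (γ : ℝ) (P : Matrix S S ℝ) (μ r : S → ℝ) : ℝ :=
  (1 - γ) * ∑' t : ℕ, γ ^ t * ∑ x, (μ ᵥ* P ^ t) x * r x

variable {γ : ℝ} {P : Matrix S S ℝ} {μ : S → ℝ}
  (hγ0 : 0 ≤ γ) (hγ1 : γ < 1) (hP : P ∈ rowStochastic ℝ S) (hμ : μ ∈ stdSimplex ℝ S)
include hγ0 hγ1 hP hμ

lemma summable_discounted_vecMul_pow (x : S) :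
    Summable fun t : ℕ => γ ^ t * (μ ᵥ* P ^ t) x := by
  have hmem := vecMul_pow_mem_stdSimplex hP hμ
  refine (summable_geometric_of_lt_one hγ0 hγ1).of_nonneg_of_le
    (fun t => mul_nonneg (pow_nonneg hγ0 t) ((hmem t).1 x)) fun t => ?_
  exact mul_le_of_le_one_right (pow_nonneg hγ0 t) (mem_Icc_of_mem_stdSimplex (hmem t) x).2

lemma discountedOccupancy_mem_stdSimplex : discountedOccupancy γ P μ ∈ stdSimplex ℝ S := by
  have hmem := vecMul_pow_mem_stdSimplex hP hμ
  refine ⟨fun x => mul_nonneg (sub_nonneg.2 hγ1.le) (tsum_nonneg fun t =>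
    mul_nonneg (pow_nonneg hγ0 t) ((hmem t).1 x)), ?_⟩
  calc ∑ x, discountedOccupancy γ P μ x
      = (1 - γ) * ∑' t : ℕ, ∑ x, γ ^ t * (μ ᵥ* P ^ t) x := by
        rw [Summable.tsum_finsetSum fun x _ =>
          summable_discounted_vecMul_pow hγ0 hγ1 hP hμ x, mul_sum]
        rfl
    _ = (1 - γ) * ∑' t : ℕ, γ ^ t := by simp_rw [← mul_sum, (hmem _).2, mul_one]
    _ = 1 := by rw [tsum_geometric_of_lt_one hγ0 hγ1]; field_simp [(sub_pos.2 hγ1).ne']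

lemma discountedReturn_eq_dotProduct (r : S → ℝ) :
    discountedReturn γ P μ r = discountedOccupancy γ P μ ⬝ᵥ r := by
  have hsum := summable_discounted_vecMul_pow hγ0 hγ1 hP hμ
  calc discountedReturn γ P μ r
      = (1 - γ) * ∑' t : ℕ, ∑ x, γ ^ t * (μ ᵥ* P ^ t) x * r x := by
        simp_rw [discountedReturn, mul_sum, mul_assoc]
    _ = (1 - γ) * ∑ x, (∑' t : ℕ, γ ^ t * (μ ᵥ* P ^ t) x) * r x := by
        rw [Summable.tsum_finsetSum fun x _ => (hsum x).mul_right (r x)]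
        simp_rw [tsum_mul_right]
    _ = discountedOccupancy γ P μ ⬝ᵥ r := by
        simp_rw [mul_sum, dotProduct, discountedOccupancy, mul_assoc]

lemma discountedOccupancy_vecMul :
    discountedOccupancy γ P μ ᵥ* P =
      fun y => (1 - γ) * ∑' t : ℕ, γ ^ t * (μ ᵥ* P ^ (t + 1)) y := by
  have hsum := summable_discounted_vecMul_pow hγ0 hγ1 hP hμ
  ext y
  calc (discountedOccupancy γ P μ ᵥ* P) y
      = (1 - γ) * ∑ x, ∑' t : ℕ, γ ^ t * (μ ᵥ* P ^ t) x * P x y := by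
        simp only [vecMul, dotProduct, discountedOccupancy, mul_sum, tsum_mul_right, mul_assoc]
    _ = (1 - γ) * ∑' t : ℕ, γ ^ t * (μ ᵥ* P ^ (t + 1)) y := by
        rw [← Summable.tsum_finsetSum fun x _ => (hsum x).mul_right (P x y)]
        simp only [pow_succ, ← vecMul_vecMul, mul_assoc, ← mul_sum]
        rfl

lemma discountedOccupancy_flow :
    (1 - γ) • μ + γ • (discountedOccupancy γ P μ ᵥ* P) = discountedOccupancy γ P μ := by
  have hsum := summable_discounted_vecMul_pow hγ0 hγ1 hP hμ
  ext y
  rw [discountedOccupancy_vecMul hγ0 hγ1 hP hμ, discountedOccupancy,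
    (hsum y).tsum_eq_zero_add]
  simp only [Pi.add_apply, Pi.smul_apply, smul_eq_mul, pow_zero, vecMul_one, one_mul,
    pow_succ' γ, mul_assoc, tsum_mul_left]
  ring

lemma discountedOccupancy_dotProduct_sub_mulVec (V : S → ℝ) :
    discountedOccupancy γ P μ ⬝ᵥ (V - γ • (P *ᵥ V)) = (1 - γ) * (μ ⬝ᵥ V) := by
  have hflow := congrArg (· ⬝ᵥ V) (discountedOccupancy_flow hγ0 hγ1 hP hμ)
  simp only [add_dotProduct, smul_dotProduct, smul_eq_mul] at hflow
  rw [dotProduct_sub, dotProduct_smul, dotProduct_mulVec, smul_eq_mul]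
  linarith

lemma discountedReturn_sub_discountedReturn {P' : Matrix S S ℝ}
    (hP' : P' ∈ rowStochastic ℝ S) {r V : S → ℝ} (hV : V = r + γ • (P *ᵥ V)) :
    discountedReturn γ P' μ r - discountedReturn γ P μ r =
      γ * (discountedOccupancy γ P' μ ⬝ᵥ ((P' - P) *ᵥ V)) := by
  have hr : r = V - γ • (P *ᵥ V) := by rw [eq_sub_iff_add_eq, ← hV]
  have hr' : r = V - γ • (P' *ᵥ V) + γ • ((P' - P) *ᵥ V) := by
    rw [hr, sub_mulVec, smul_sub]; abel
  calc discountedReturn γ P' μ r - discountedReturn γ P μ r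
      = discountedOccupancy γ P' μ ⬝ᵥ (V - γ • (P' *ᵥ V) + γ • ((P' - P) *ᵥ V)) -
          discountedOccupancy γ P μ ⬝ᵥ (V - γ • (P *ᵥ V)) := by
        rw [discountedReturn_eq_dotProduct hγ0 hγ1 hP' hμ,
          discountedReturn_eq_dotProduct hγ0 hγ1 hP hμ, ← hr', ← hr]
    _ = γ * (discountedOccupancy γ P' μ ⬝ᵥ ((P' - P) *ᵥ V)) := by
        rw [dotProduct_add, discountedOccupancy_dotProduct_sub_mulVec hγ0 hγ1 hP' hμ,
          discountedOccupancy_dotProduct_sub_mulVec hγ0 hγ1 hP hμ, dotProduct_smul,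
          smul_eq_mul]
        ring

end Discounted

theorem two_sided_value_gap_general {S : Type*} [Fintype S] [DecidableEq S]
    (γ : ℝ) (hγ0 : 0 < γ) (hγ1 : γ < 1)
    (c : ℝ)
    (T That : Matrix S S ℝ)
    (hT0 : ∀ x y, 0 ≤ T x y) (hT1 : ∀ x, ∑ y, T x y = 1)
    (hThat0 : ∀ x y, 0 ≤ That x y) (hThat1 : ∀ x, ∑ y, That x y = 1)
    (r : S → ℝ)
    (V : S → ℝ) (hV : ∀ x, V x = r x + γ * ∑ y, T x y * V y)
    (hVbd : ∀ x, |V x| ≤ c)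
    (μ₀ : S → ℝ) (hμ0 : ∀ x, 0 ≤ μ₀ x) (hμ1 : ∑ x, μ₀ x = 1)
    (u : S → ℝ)
    (C : ℝ) (ε_approx : ℝ)
    (hmodel : ∀ x, ∀ f : S → ℝ, (∀ y, |f y| ≤ 1) →
      |∑ y, (That x y - T x y) * f y| ≤ C * (∑ y, That x y * u y) + ε_approx)
    (ηM ηMhat : ℝ)
    (hηM : ηM = (1 - γ) * ∑' t : ℕ, γ ^ t * ∑ x, Matrix.vecMul μ₀ (T ^ t) x * r x)
    (hηMhat : ηMhat =
      (1 - γ) * ∑' t : ℕ, γ ^ t * ∑ x, Matrix.vecMul μ₀ (That ^ t) x * r x)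
    (ρhatn : S → ℝ)
    (hρ : ∀ x, ρhatn x = (1 - γ) * ∑' t : ℕ, γ ^ t * Matrix.vecMul μ₀ (That ^ t) x) :
    |ηMhat - ηM| ≤
      γ * c * C * (∑ x, ρhatn x * ∑ y, That x y * u y) + γ * c * ε_approx := by
  have hT : T ∈ rowStochastic ℝ S := mem_rowStochastic_iff_sum.2 ⟨hT0, hT1⟩
  have hThat : That ∈ rowStochastic ℝ S := mem_rowStochastic_iff_sum.2 ⟨hThat0, hThat1⟩
  have hμ : μ₀ ∈ stdSimplex ℝ S := ⟨hμ0, hμ1⟩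
  have hρhat : ρhatn = discountedOccupancy γ That μ₀ := funext hρ
  have hρmem : ρhatn ∈ stdSimplex ℝ S :=
    hρhat ▸ discountedOccupancy_mem_stdSimplex hγ0.le hγ1 hThat hμ
  have hgap : ηMhat - ηM = γ * (ρhatn ⬝ᵥ ((That - T) *ᵥ V)) :=
    hηM ▸ hηMhat ▸ hρhat ▸
      discountedReturn_sub_discountedReturn hγ0.le hγ1 hT hμ hThat (funext hV)
  have herror : ∀ x, |((That - T) *ᵥ V) x| ≤ c * (C * (That *ᵥ u) x + ε_approx) := fun x =>
    abs_dotProduct_le_mul_of_forall_abs_le_one (hmodel x) ((abs_nonneg _).trans (hVbd x))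
      hVbd
  calc |ηMhat - ηM| = γ * |ρhatn ⬝ᵥ ((That - T) *ᵥ V)| := by
        rw [hgap, abs_mul, abs_of_pos hγ0]
    _ ≤ γ * (ρhatn ⬝ᵥ fun x => c * (C * (That *ᵥ u) x + ε_approx)) := by
        gcongr
        exact abs_dotProduct_le_of_nonneg hρmem.1 herror
    _ = γ * c * C * (ρhatn ⬝ᵥ (That *ᵥ u)) + γ * c * ε_approx * ∑ x, ρhatn x := by
        simp only [dotProduct, mul_add, sum_add_distrib, mul_sum]
        congr 1 <;> exact sum_congr rfl fun _ _ => by ring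
    _ = γ * c * C * (∑ x, ρhatn x * ∑ y, That x y * u y) + γ * c * ε_approx := by
        rw [hρmem.2, mul_one]
        rfl

/-- Two-sided value gap bound under density-dependent model error. -/
theorem two_sided_value_gap {S : Type*} [Fintype S] [DecidableEq S] [Nonempty S]
    (γ : ℝ) (hγ0 : 0 < γ) (hγ1 : γ < 1)
    (r_max : ℝ) (hr_max : 0 < r_max)
    (c : ℝ) (hc : c = r_max / (1 - γ))
    (T That : Matrix S S ℝ)
    (hT0 : ∀ x y, 0 ≤ T x y) (hT1 : ∀ x, ∑ y, T x y = 1)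
    (hThat0 : ∀ x y, 0 ≤ That x y) (hThat1 : ∀ x, ∑ y, That x y = 1)
    (r : S → ℝ) (hr : ∀ x, |r x| ≤ r_max)
    (V : S → ℝ) (hV : ∀ x, V x = r x + γ * ∑ y, T x y * V y)
    (hVbd : ∀ x, |V x| ≤ c)
    (μ₀ : S → ℝ) (hμ0 : ∀ x, 0 ≤ μ₀ x) (hμ1 : ∑ x, μ₀ x = 1)
    (u : S → ℝ)
    (C : ℝ) (hC : 0 < C) (ε_approx : ℝ) (hεa : 0 ≤ ε_approx)
    (hmodel : ∀ x, ∀ f : S → ℝ, (∀ y, |f y| ≤ 1) →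
      |∑ y, (That x y - T x y) * f y| ≤ C * (∑ y, That x y * u y) + ε_approx)
    (ηM ηMhat : ℝ)
    (hηM : ηM = (1 - γ) * ∑' t : ℕ, γ ^ t * ∑ x, Matrix.vecMul μ₀ (T ^ t) x * r x)
    (hηMhat : ηMhat =
      (1 - γ) * ∑' t : ℕ, γ ^ t * ∑ x, Matrix.vecMul μ₀ (That ^ t) x * r x)
    (ρhatn : S → ℝ)
    (hρ : ∀ x, ρhatn x = (1 - γ) * ∑' t : ℕ, γ ^ t * Matrix.vecMul μ₀ (That ^ t) x) :
    |ηMhat - ηM| ≤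
      γ * c * C * (∑ x, ρhatn x * ∑ y, That x y * u y) + γ * c * ε_approx :=
  two_sided_value_gap_general γ hγ0 hγ1 c T That hT0 hT1 hThat0 hThat1 r V hV hVbd μ₀ hμ0 hμ1 u C
    ε_approx hmodel ηM ηMhat hηM hηMhat ρhatn hρ
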